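/- arXiv:0910.4800 — 5 statements merged into one kernel-verified Lean document; each statement's English description precedes it below -/
import Mathlib

section
/- Let 𝒜 = {a,b,c,d} and let ω^G be the Grigorchuk substitution sequence. Let Ω = Z(ω^G,σ). Then there exist a countable set Ω₁ ⊆ Ω and a continuous surjection f : Ω → ℤ₂ such that: (1) f(σx) = f(x) + 1 for every x ∈ Ω; (2) the complement Ω \ Ω₁ is invariant under σ (i.e. σ(Ω \ Ω₁) ⊆ Ω \ Ω₁); and (3) the restriction of f to Ω \ Ω₁ is injective. In other words, the subshift σ|_Ω is, up to a countable set, continuously conjugated to the binary odometer. -/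
/-- The four-letter alphabet 𝒜 = {a,b,c,d}. -/
inductive A : Type
  | a | b | c | d
  deriving DecidableEq

instance : TopologicalSpace A := ⊥
instance : DiscreteTopology A := ⟨rfl⟩

/-- The one-sided shift on sequences.  Sequences are 0-indexed here: index `n`
stands for position `n+1` of the paper's sequences `{1,2,3,…} → 𝒜`. -/
def shift {𝒜 : Type*} (x : ℕ → 𝒜) : ℕ → 𝒜 := fun n => x (n + 1)

/-- `Z(ω,σ)`: the closure of the forward shift-orbit of `ω`. -/
def orbitClosure {𝒜 : Type*} [TopologicalSpace 𝒜] (ω : ℕ → 𝒜) : Set (ℕ → 𝒜) :=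
  closure {y | ∃ n : ℕ, shift^[n] ω = y}

/-- The Grigorchuk substitution sequence `ω^G` (0-indexed: `omegaG n` is the letter at
position `m = n+1`).  Writing `m = 2^k(2l+1)`: the letter is `a` if `k = 0`, and for
`k ≥ 1` it is `d`, `c`, or `b` according as `k ≡ 0, 1, 2 (mod 3)`. -/
def omegaG : ℕ → A := fun n =>
  if padicValNat 2 (n + 1) = 0 then A.a
  else if padicValNat 2 (n + 1) % 3 = 0 then A.d
  else if padicValNat 2 (n + 1) % 3 = 1 then A.c
  else A.b

/-!
Call `x` a coding of `z ∈ ℤ₂` if `x p = letter (v₂ (z + p + 1))` whenever `z + p + 1 ≠ 0`; the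
orbit point `σⁿ ω^G` codes `n`, and `σ` sends codings of `z` to codings of `z + 1`. Being a coding
is a closed condition, so by compactness of `ℤ₂` every point of `Ω` codes some `z`. It codes only
one: if `v₂ (z' - z) = j`, some `p` has `v₂ (z + p + 1) = j` and `v₂ (z' + p + 1) = j + 1`, and
consecutive valuations carry different letters. The map `f` sending `x` to the point it codes has
closed graph with compact target, hence is continuous, and its image is compact and contains `ℕ`,
hence everything. Finally a coding of `z` is pinned down everywhere except at the `p` with
`z + p + 1 = 0`; such a `p` exists only for `z ∈ -ℕ-1`, whose fibres form the countable set `Ω₁`.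
-/

namespace PadicInt

variable {p : ℕ} [Fact p.Prime]

lemma valuation_natCast (n : ℕ) : (n : ℤ_[p]).valuation = padicValNat p n := by
  rw [← Nat.cast_inj (R := ℤ), ← valuation_coe, coe_natCast, Padic.valuation_natCast]

lemma valuation_eq_iff_norm_eq {x : ℤ_[p]} (hx : x ≠ 0) (n : ℕ) :
    x.valuation = n ↔ ‖x‖ = (p : ℝ) ^ (-n : ℤ) := by
  have hp : (1 : ℝ) < p := by exact_mod_cast (Fact.out : p.Prime).one_lt
  rw [norm_eq_zpow_neg_valuation hx, zpow_right_inj₀ (by positivity) hp.ne', neg_inj,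
    Nat.cast_inj]

lemma isOpen_setOf_ne_zero_and_valuation_eq (n : ℕ) :
    IsOpen {w : ℤ_[p] | w ≠ 0 ∧ w.valuation = n} := by
  convert IsUltrametricDist.isOpen_sphere (0 : ℤ_[p]) (r := (p : ℝ) ^ (-n : ℤ))
    (zpow_ne_zero _ (by exact_mod_cast (Fact.out : p.Prime).ne_zero)) using 1
  ext w
  rw [mem_sphere_iff_norm, sub_zero, Set.mem_ofPred_eq]
  by_cases hw : w = 0
  · simpa [hw] using (pow_ne_zero n (Nat.cast_ne_zero.mpr (Fact.out : p.Prime).ne_zero)).symm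
  · rw [valuation_eq_iff_norm_eq hw]
    exact and_iff_right hw

lemma norm_add_p_mul_eq_one {u : ℤ_[p]} (hu : ‖u‖ = 1) (t : ℤ_[p]) : ‖u + p * t‖ = 1 := by
  have ht : ‖(p : ℤ_[p]) * t‖ < 1 := by
    refine (norm_mul_le_of_le (le_refl _) t.norm_le_one).trans_lt ?_
    rw [norm_p, mul_one]
    exact inv_lt_one_of_one_lt₀ (by exact_mod_cast (Fact.out : p.Prime).one_lt)
  rw [IsUltrametricDist.norm_add_eq_max_of_norm_ne_norm (by rw [hu]; exact ht.ne'), hu]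
  exact max_eq_left ht.le

lemma valuation_p_pow_mul_of_norm_eq_one (n : ℕ) {c : ℤ_[p]} (hc : ‖c‖ = 1) :
    ((p : ℤ_[p]) ^ n * c).valuation = n := by
  have hc0 : c ≠ 0 := by rintro rfl; simp at hc
  rw [valuation_p_pow_mul n c hc0, Nat.add_eq_left, valuation_eq_iff_norm_eq hc0]
  simpa using hc

lemma exists_natCast_valuation_eq_and_add_valuation_eq_succ {δ : ℤ_[2]} (hδ : δ ≠ 0)
    (z : ℤ_[2]) :
    ∃ n : ℕ, z + n ≠ 0 ∧ (z + n).valuation = δ.valuation ∧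
      z + n + δ ≠ 0 ∧ (z + n + δ).valuation = δ.valuation + 1 := by
  obtain ⟨u, hu, hδu⟩ : ∃ u : ℤ_[2], ‖u‖ = 1 ∧ δ = 2 ^ δ.valuation * u :=
    ⟨_, norm_units (unitCoeff hδ), by rw [mul_comm]; exact_mod_cast unitCoeff_spec hδ⟩
  set j := δ.valuation
  -- `n ≡ 2^(j+1) - δ - z mod 2^(j+2)` makes `z + n ≡ 2^(j+1) - δ` and `z + n + δ ≡ 2^(j+1)`.
  obtain ⟨t, ht⟩ := Ideal.mem_span_singleton'.mp (appr_spec (j + 2) (2 ^ (j + 1) - δ - z))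
  refine ⟨(2 ^ (j + 1) - δ - z).appr (j + 2), ?_⟩
  push_cast at ht
  have hw : z + (2 ^ (j + 1) - δ - z).appr (j + 2) = (2 : ℕ) ^ j * (-u + 2 * (1 - 2 * t)) := by
    push_cast; linear_combination ht - hδu
  have hw' : z + (2 ^ (j + 1) - δ - z).appr (j + 2) + δ = (2 : ℕ) ^ (j + 1) * (1 + 2 * (-t)) := by
    push_cast; linear_combination ht
  have hc := norm_add_p_mul_eq_one (p := 2) (by rwa [norm_neg]) (1 - 2 * t)
  have hc' := norm_add_p_mul_eq_one (p := 2) norm_one (-t)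
  refine ⟨?_, ?_, ?_, ?_⟩
  · rw [hw]; exact mul_ne_zero (by simp) (norm_ne_zero_iff.mp (hc ▸ one_ne_zero))
  · rw [hw]; exact valuation_p_pow_mul_of_norm_eq_one j hc
  · rw [hw']; exact mul_ne_zero (by simp) (norm_ne_zero_iff.mp (hc' ▸ one_ne_zero))
  · rw [hw']; exact valuation_p_pow_mul_of_norm_eq_one (j + 1) hc'

lemma isClosed_setOf_ne_zero_imp {X β : Type*}
    [TopologicalSpace X] [TopologicalSpace β] [DiscreteTopology β] {g : X → ℤ_[p]} {h : X → β}
    (hg : Continuous g) (hh : Continuous h) (φ : ℕ → β) :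
    IsClosed {x | g x ≠ 0 → h x = φ (g x).valuation} := by
  rw [← isOpen_compl_iff, isOpen_iff_forall_mem_open]
  intro x hx
  simp only [Set.mem_compl_iff, Set.mem_ofPred_eq, Classical.not_imp] at hx
  refine ⟨h ⁻¹' {h x} ∩ g ⁻¹' {w | w ≠ 0 ∧ w.valuation = (g x).valuation}, ?_,
    ((isOpen_discrete _).preimage hh).inter
      ((isOpen_setOf_ne_zero_and_valuation_eq _).preimage hg), rfl, hx.1, rfl⟩
  rintro y ⟨hy, hy0, hyv⟩
  simp only [Set.mem_preimage, Set.mem_singleton_iff] at hy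
  simp only [Set.mem_compl_iff, Set.mem_ofPred_eq, Classical.not_imp]
  exact ⟨hy0, by rw [hy, hyv]; exact hx.2⟩

end PadicInt

open PadicInt

lemma continuousOn_of_isClosed_graph_of_compactSpace {X Y : Type*} [TopologicalSpace X]
    [TopologicalSpace Y] [CompactSpace Y] {f : X → Y} {s : Set X} {R : Set (X × Y)}
    (hR : IsClosed R) (hf : ∀ x ∈ s, ∀ y, (x, y) ∈ R ↔ f x = y) : ContinuousOn f s := by
  refine continuousOn_iff_isClosed.mpr fun t ht =>
    ⟨Prod.fst '' (R ∩ Set.univ ×ˢ t),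
      isClosedMap_fst_of_compactSpace _ (hR.inter (isClosed_univ.prod ht)), ?_⟩
  ext x
  simp only [Set.mem_inter_iff, Set.mem_preimage, Set.mem_image, Set.mem_prod, Set.mem_univ,
    true_and, Prod.exists, exists_and_right, exists_eq_right]
  constructor
  · rintro ⟨hxt, hx⟩
    exact ⟨⟨f x, (hf x hx _).mpr rfl, hxt⟩, hx⟩
  · rintro ⟨⟨y, hR, hyt⟩, hx⟩
    exact ⟨(hf x hx y).mp hR ▸ hyt, hx⟩

lemma shift_iterate_apply {𝒜 : Type*} (x : ℕ → 𝒜) (n p : ℕ) : shift^[n] x p = x (p + n) := by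
  induction n generalizing x with
  | zero => rfl
  | succ n ih => rw [Function.iterate_succ_apply, ih]; rfl

lemma continuous_shift {𝒜 : Type*} [TopologicalSpace 𝒜] :
    Continuous (shift : (ℕ → 𝒜) → ℕ → 𝒜) :=
  continuous_pi fun n => continuous_apply (n + 1)

lemma mapsTo_shift_orbitClosure {𝒜 : Type*} [TopologicalSpace 𝒜] (ω : ℕ → 𝒜) :
    Set.MapsTo shift (orbitClosure ω) (orbitClosure ω) := by
  refine Set.MapsTo.closure ?_ continuous_shift
  rintro _ ⟨n, rfl⟩
  exact ⟨n + 1, Function.iterate_succ_apply' _ _ _⟩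

namespace Grigorchuk

instance : Fintype A := ⟨{A.a, A.b, A.c, A.d}, by rintro (_ | _ | _ | _) <;> simp⟩

def letter (k : ℕ) : A :=
  if k = 0 then A.a else if k % 3 = 0 then A.d else if k % 3 = 1 then A.c else A.b

lemma omegaG_apply (n : ℕ) : omegaG n = letter (padicValNat 2 (n + 1)) := rfl

lemma letter_ne_letter_succ (k : ℕ) : letter k ≠ letter (k + 1) := by
  unfold letter
  split_ifs <;> first | decide | contradiction | omega

def IsCoding (z : ℤ_[2]) (x : ℕ → A) : Prop :=
  ∀ p : ℕ, z + (p + 1 : ℕ) ≠ 0 → x p = letter (z + (p + 1 : ℕ)).valuation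

lemma isCoding_iterate_shift_omegaG (n : ℕ) : IsCoding n (shift^[n] omegaG) := by
  intro p _
  rw [shift_iterate_apply, omegaG_apply, ← Nat.cast_add, valuation_natCast]
  congr 2
  omega

lemma IsCoding.shift {z : ℤ_[2]} {x : ℕ → A} (hx : IsCoding z x) : IsCoding (z + 1) (shift x) := by
  intro p hp
  have h : z + 1 + (p + 1 : ℕ) = z + (p + 1 + 1 : ℕ) := by push_cast; ring
  rw [h] at hp ⊢
  exact hx (p + 1) hp

lemma IsCoding.apply_eq {z : ℤ_[2]} {x y : ℕ → A} (hx : IsCoding z x) (hy : IsCoding z y) {p : ℕ}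
    (hp : z + (p + 1 : ℕ) ≠ 0) : x p = y p :=
  (hx p hp).trans (hy p hp).symm

lemma IsCoding.unique {z z' : ℤ_[2]} {x : ℕ → A} (hz : IsCoding z x) (hz' : IsCoding z' x) :
    z = z' := by
  by_contra hne
  obtain ⟨n, hw, hv, hw', hv'⟩ :=
    exists_natCast_valuation_eq_and_add_valuation_eq_succ (sub_ne_zero.mpr (Ne.symm hne)) (z + 1)
  have e : z + 1 + n = z + (n + 1 : ℕ) := by push_cast; ring
  have e' : z + 1 + n + (z' - z) = z' + (n + 1 : ℕ) := by push_cast; ring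
  rw [e] at hw hv
  rw [e'] at hw' hv'
  exact letter_ne_letter_succ _ (hv ▸ hv' ▸ (hz n hw).symm.trans (hz' n hw'))

lemma isClosed_setOf_isCoding : IsClosed {q : (ℕ → A) × ℤ_[2] | IsCoding q.2 q.1} := by
  simp only [IsCoding, Set.ofPred_forall]
  exact isClosed_iInter fun p =>
    isClosed_setOf_ne_zero_imp
      (g := fun q : (ℕ → A) × ℤ_[2] => q.2 + ((p + 1 : ℕ) : ℤ_[2])) (by fun_prop)
      ((continuous_apply p).comp continuous_fst) letter

lemma exists_isCoding {x : ℕ → A} (hx : x ∈ orbitClosure omegaG) : ∃ z, IsCoding z x := by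
  have hclosed : IsClosed (Prod.fst '' {q : (ℕ → A) × ℤ_[2] | IsCoding q.2 q.1}) :=
    isClosedMap_fst_of_compactSpace _ isClosed_setOf_isCoding
  have horbit : {y | ∃ n, shift^[n] omegaG = y} ⊆
      Prod.fst '' {q : (ℕ → A) × ℤ_[2] | IsCoding q.2 q.1} := by
    rintro _ ⟨n, rfl⟩
    exact ⟨(_, n), isCoding_iterate_shift_omegaG n, rfl⟩
  obtain ⟨⟨y, z⟩, hyz, rfl⟩ := closure_minimal horbit hclosed hx
  exact ⟨z, hyz⟩

noncomputable def coding (x : ℕ → A) : ℤ_[2] := Classical.epsilon (IsCoding · x)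

lemma IsCoding.coding_eq {z : ℤ_[2]} {x : ℕ → A} (hx : IsCoding z x) : coding x = z :=
  (Classical.epsilon_spec (p := (IsCoding · x)) ⟨z, hx⟩).unique hx

lemma isCoding_coding {x : ℕ → A} (hx : x ∈ orbitClosure omegaG) : IsCoding (coding x) x :=
  Classical.epsilon_spec (exists_isCoding hx)

lemma coding_shift {x : ℕ → A} (hx : x ∈ orbitClosure omegaG) :
    coding (shift x) = coding x + 1 :=
  (isCoding_coding hx).shift.coding_eq

lemma continuousOn_coding : ContinuousOn coding (orbitClosure omegaG) :=
  continuousOn_of_isClosed_graph_of_compactSpace (R := {q | IsCoding q.2 q.1})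
    isClosed_setOf_isCoding fun _ hx _ =>
      ⟨fun h => h.coding_eq, fun h => h ▸ isCoding_coding hx⟩

lemma coding_image_orbitClosure : coding '' orbitClosure omegaG = Set.univ := by
  have hclosed : IsClosed (coding '' orbitClosure omegaG) :=
    (isClosed_closure.isCompact.image_of_continuousOn continuousOn_coding).isClosed
  refine Set.eq_univ_of_univ_subset ?_
  rw [← (denseRange_natCast (p := 2)).closure_range]
  refine closure_minimal ?_ hclosed
  rintro _ ⟨n, rfl⟩
  exact ⟨_, subset_closure ⟨n, rfl⟩, (isCoding_iterate_shift_omegaG n).coding_eq⟩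

lemma countable_setOf_isCoding (z : ℤ_[2]) : {x | IsCoding z x}.Countable := by
  obtain ⟨p₀, hp₀⟩ : ∃ p₀ : ℕ, ∀ p : ℕ, z + (p + 1 : ℕ) = 0 → p = p₀ := by
    by_cases h : ∃ p₀ : ℕ, z + (p₀ + 1 : ℕ) = 0
    · obtain ⟨p₀, h₀⟩ := h
      exact ⟨p₀, fun p hp =>
        Nat.succ_injective (by exact_mod_cast add_left_cancel (hp.trans h₀.symm))⟩
    · simp only [not_exists] at h
      exact ⟨0, fun p hp => absurd hp (h p)⟩
  refine (Set.mapsTo_univ (fun x : ℕ → A => x p₀) _).countable_of_injOn ?_ Set.countable_univ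
  intro x hx y hy hxy
  funext p
  by_cases hp : z + (p + 1 : ℕ) = 0
  · rwa [hp₀ p hp]
  · exact hx.apply_eq hy hp

end Grigorchuk

open Grigorchuk

/-- The subshift `σ|_{Z(ω^G,σ)}` is, up to a countable set, continuously conjugated to
the binary odometer `z ↦ z + 1` on `ℤ₂`. -/
theorem stmt0 :
    ∃ (Ω₁ : Set (ℕ → A)) (f : (ℕ → A) → ℤ_[2]),
      Ω₁ ⊆ orbitClosure omegaG ∧
      Ω₁.Countable ∧
      ContinuousOn f (orbitClosure omegaG) ∧
      f '' orbitClosure omegaG = Set.univ ∧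
      (∀ x ∈ orbitClosure omegaG, f (shift x) = f x + 1) ∧
      (∀ x ∈ orbitClosure omegaG \ Ω₁, shift x ∈ orbitClosure omegaG \ Ω₁) ∧
      Set.InjOn f (orbitClosure omegaG \ Ω₁) := by
  refine ⟨{x ∈ orbitClosure omegaG | ∃ p : ℕ, coding x + (p + 1 : ℕ) = 0}, coding,
    fun x hx => hx.1, ?_, continuousOn_coding, coding_image_orbitClosure,
    fun x hx => coding_shift hx, ?_, ?_⟩
  · refine (Set.countable_iUnion fun p : ℕ => countable_setOf_isCoding (-(p + 1 : ℕ))).mono ?_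
    rintro x ⟨hx, p, hp⟩
    exact Set.mem_iUnion.mpr ⟨p, eq_neg_of_add_eq_zero_left hp ▸ isCoding_coding hx⟩
  · rintro x ⟨hx, hx₁⟩
    refine ⟨mapsTo_shift_orbitClosure _ hx, fun ⟨_, p, hp⟩ => hx₁ ⟨hx, p + 1, ?_⟩⟩
    rw [coding_shift hx] at hp
    push_cast at hp ⊢
    linear_combination hp
  · rintro x ⟨hx, hx₁⟩ y ⟨hy, -⟩ hxy
    funext p
    exact (isCoding_coding hx).apply_eq (hxy ▸ isCoding_coding hy) fun h => hx₁ ⟨hx, p, h⟩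
end

section
/- Let 𝒜 = {a,b,c,d}, let τ_G be the Grigorchuk substitution, and let ω^G be the explicitly defined sequence: writing m ≥ 1 as m = 2^k(2n+1) with k,n ≥ 0, ω^G(m) = a if k = 0, and for k ≥ 1, ω^G(m) = d, c, or b according as k ≡ 0, 1, or 2 (mod 3). Then for every integer j ≥ 0 the finite word τ_G^j(a) is a prefix of ω^G; that is, for every j ≥ 0 and every position 1 ≤ m ≤ length(τ_G^j(a)), the m-th letter of the word τ_G^j(a) equals ω^G(m). (Consequently ω^G is the fixed point of τ_G obtained as the limit of the words τ_G^j(a).) -/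
def tauL : A → List A
  | A.a => [A.a, A.c, A.a]
  | A.b => [A.d]
  | A.c => [A.b]
  | A.d => [A.c]

def tauW : List A → List A := fun w => w.flatMap tauL

/-!
Write `w_j = τ_G^j(a)`. Then `w_{j+1} = w_j · τ_G^j(c) · w_j`, where `τ_G^j(c)` is the single
letter `ω^G(2^{j+1})`, and `|w_j| = 2^{j+1} - 1`. Adding `2^{j+1}` to a positive integer below
`2^{j+1}` does not change its 2-adic valuation, so `ω^G` has the same shape on `[1, 2^{j+2})`,
and induction on `j` gives the claim.
-/

lemma padicValNat_add_pow_of_lt {p t s : ℕ} [Fact p.Prime] (ht : t ≠ 0)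
    (hs : padicValNat p t < s) : padicValNat p (t + p ^ s) = padicValNat p t := by
  have key := padicValRat.add_eq_of_lt (p := p) (q := t) (r := (p ^ s : ℕ))
    (by positivity) (by exact_mod_cast ht)
    (by exact_mod_cast (pow_pos (Fact.out : p.Prime).pos s).ne')
    (by rw [← padicValRat_of_nat, ← padicValRat_of_nat, padicValNat.prime_pow]
        exact_mod_cast hs)
  rw [← Nat.cast_add, ← padicValRat_of_nat, ← padicValRat_of_nat] at key
  exact_mod_cast key

lemma padicValNat_lt_of_lt_pow {p t s : ℕ} [Fact p.Prime] (ht : t ≠ 0) (hts : t < p ^ s) :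
    padicValNat p t < s :=
  (Nat.pow_lt_pow_iff_right (Fact.out : p.Prime).one_lt).mp
    ((Nat.le_of_dvd (Nat.pos_of_ne_zero ht) pow_padicValNat_dvd).trans_lt hts)

lemma omegaG_add_two_pow {m s : ℕ} (hm : m + 1 < 2 ^ s) : omegaG (m + 2 ^ s) = omegaG m := by
  have : Fact (Nat.Prime 2) := ⟨Nat.prime_two⟩
  unfold omegaG
  rw [add_right_comm, padicValNat_add_pow_of_lt m.succ_ne_zero
    (padicValNat_lt_of_lt_pow m.succ_ne_zero hm)]

lemma omegaG_two_pow_sub_one (k : ℕ) :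
    omegaG (2 ^ k - 1) =
      if k = 0 then A.a else if k % 3 = 0 then A.d else if k % 3 = 1 then A.c else A.b := by
  have : Fact (Nat.Prime 2) := ⟨Nat.prime_two⟩
  rw [omegaG, Nat.sub_add_cancel Nat.one_le_two_pow, padicValNat.prime_pow]

lemma tauW_append (u v : List A) : tauW (u ++ v) = tauW u ++ tauW v :=
  List.flatMap_append

lemma tauW_iterate_append (j : ℕ) (u v : List A) :
    tauW^[j] (u ++ v) = tauW^[j] u ++ tauW^[j] v := by
  induction j generalizing u v with
  | zero => rfl
  | succ j ih => simp only [Function.iterate_succ_apply, tauW_append, ih]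

lemma tauW_iterate_c (j : ℕ) : tauW^[j] [A.c] = [omegaG (2 ^ (j + 1) - 1)] := by
  induction j with
  | zero => rw [omegaG_two_pow_sub_one]; rfl
  | succ j ih =>
    rw [Function.iterate_succ_apply', ih, omegaG_two_pow_sub_one, omegaG_two_pow_sub_one]
    have : j % 3 = 0 ∨ j % 3 = 1 ∨ j % 3 = 2 := by omega
    rcases this with h | h | h <;> simp [tauW, tauL, Nat.add_mod, h]

lemma tauW_iterate_succ_a (j : ℕ) :
    tauW^[j + 1] [A.a] = tauW^[j] [A.a] ++ omegaG (2 ^ (j + 1) - 1) :: tauW^[j] [A.a] := by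
  rw [Function.iterate_succ_apply, show tauW [A.a] = [A.a] ++ [A.c] ++ [A.a] from rfl,
    tauW_iterate_append, tauW_iterate_append, tauW_iterate_c, List.append_assoc,
    List.singleton_append]

lemma length_tauW_iterate_a (j : ℕ) : (tauW^[j] [A.a]).length = 2 ^ (j + 1) - 1 := by
  induction j with
  | zero => rfl
  | succ j ih =>
    rw [tauW_iterate_succ_a, List.length_append, List.length_cons, ih, pow_succ 2 (j + 1)]
    have := @Nat.one_le_two_pow (j + 1)
    omega

lemma List.getElem_append_cons_self_eq {α : Type*} {u : List α} {x : α} {f : ℕ → α}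
    (hu : ∀ m (h : m < u.length), u[m] = f m) (hx : x = f u.length)
    (hf : ∀ m < u.length, f (m + u.length + 1) = f m) (m : ℕ)
    (h : m < (u ++ x :: u).length) : (u ++ x :: u)[m] = f m := by
  rw [List.getElem_append]
  split_ifs with hm
  · exact hu m hm
  rw [List.getElem_cons]
  split_ifs with hm'
  · rw [hx]; congr; omega
  simp only [List.length_append, List.length_cons] at h
  obtain ⟨k, rfl⟩ : ∃ k, m = k + u.length + 1 := ⟨m - u.length - 1, by omega⟩
  rw [hf k (by omega), ← hu k (by omega)]
  congr 1; omega

/-- For every `j ≥ 0`, the word `τ_G^j(a)` is a prefix of the explicitly defined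
sequence `ω^G`: the letter of `τ_G^j(a)` at (0-based) index `m`, i.e. at position
`m+1`, equals `ω^G(m+1) = omegaG m`. -/
theorem stmt3 (j m : ℕ) (h : m < (tauW^[j] [A.a]).length) :
    (tauW^[j] [A.a])[m]'h = omegaG m := by
  induction j generalizing m with
  | zero =>
    obtain rfl : m = 0 := by simpa using h
    simp [omegaG]
  | succ j ih =>
    rw [List.getElem_of_eq (tauW_iterate_succ_a j)]
    refine List.getElem_append_cons_self_eq ih (by rw [length_tauW_iterate_a]) ?_ m _
    intro k hk
    rw [length_tauW_iterate_a] at hk ⊢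
    rw [add_assoc, Nat.sub_add_cancel Nat.one_le_two_pow, omegaG_add_two_pow (by omega)]
end

section
/- Let 𝒜 = {a,b,c,d} and let ω^G be the Grigorchuk substitution sequence. Then ω^G is a Toeplitz sequence, and the set EP(ω^G) of its essential partial periods is exactly {2^k : k ≥ 1}. -/
/-- A sequence (0-indexed: index `n` stands for position `n+1`) is Toeplitz if every
position is periodically repeated: for every `n` there is `p ≥ 1` with
`x(n+kp) = x(n)` for all `k ≥ 1`. -/
def IsToeplitz {𝒜 : Type*} (x : ℕ → 𝒜) : Prop :=
  ∀ n : ℕ, ∃ p : ℕ, 0 < p ∧ ∀ k : ℕ, 0 < k → x (n + k * p) = x n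

/-- `p ≥ 1` is an essential partial period of `x` if there is a position `m` with
`x(m+kp) = x(m)` for all `k ≥ 1`, while for every `1 ≤ p' < p` some `k ≥ 1` has
`x(m+kp') ≠ x(m)`. -/
def EP {𝒜 : Type*} (x : ℕ → 𝒜) : Set ℕ :=
  {p | 0 < p ∧ ∃ m : ℕ, (∀ k : ℕ, 0 < k → x (m + k * p) = x m) ∧
    ∀ p' : ℕ, 0 < p' → p' < p → ∃ k : ℕ, 0 < k ∧ x (m + k * p') ≠ x m}

theorem padicValNat_two_eq_iff_mod {n t : ℕ} (hn : n ≠ 0) :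
    padicValNat 2 n = t ↔ n % 2 ^ (t + 1) = 2 ^ t := by
  constructor
  · rintro rfl
    obtain ⟨k, m, ⟨r, rfl⟩, rfl⟩ := Nat.exists_eq_two_pow_mul_odd hn
    have hodd : padicValNat 2 (2 * r + 1) = 0 :=
      padicValNat.eq_zero_of_not_dvd (by omega)
    rw [padicValNat.mul (by positivity) (by omega), padicValNat.prime_pow, hodd, add_zero,
      show 2 ^ k * (2 * r + 1) = 2 ^ k + r * 2 ^ (k + 1) by ring, Nat.add_mul_mod_self_right,
      Nat.mod_eq_of_lt (Nat.pow_lt_pow_succ one_lt_two)]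
  · intro h
    have hdvd : 2 ^ t ∣ n := by
      rw [← Nat.div_add_mod n (2 ^ (t + 1)), h, pow_succ, mul_assoc]
      exact Nat.dvd_add_self_right.mpr (dvd_mul_right _ _)
    have hndvd : ¬ 2 ^ (t + 1) ∣ n := by
      rw [Nat.dvd_iff_mod_eq_zero, h]; positivity
    have hle := (padicValNat_dvd_iff_le hn).mp hdvd
    have hlt := mt (padicValNat_dvd_iff_le (p := 2) hn).mpr hndvd
    omega

theorem padicValNat_two_add_mul_of_lt {M p : ℕ} (hM : M ≠ 0)
    (h : padicValNat 2 M < padicValNat 2 p) (k : ℕ) :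
    padicValNat 2 (M + k * p) = padicValNat 2 M := by
  obtain ⟨c, rfl⟩ := (pow_dvd_pow 2 h).trans pow_padicValNat_dvd
  rw [padicValNat_two_eq_iff_mod (by omega), ← mul_assoc, mul_comm k, mul_assoc,
    mul_comm, Nat.add_mul_mod_self_right]
  exact (padicValNat_two_eq_iff_mod hM).mp rfl

theorem exists_padicValNat_two_add_mul_odd_eq (a : ℕ) {q : ℕ} (hq : Odd q) (t : ℕ) :
    ∃ j, 0 < j ∧ padicValNat 2 (a + j * q) = t := by
  set N := 2 ^ (t + 1)
  have hinv : (q : ZMod N) * (q : ZMod N)⁻¹ = 1 :=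
    ZMod.coe_mul_inv_eq_one q (hq.coprime_two_right.pow_right _)
  -- `a + j q ≡ 2 ^ t [MOD 2 ^ (t + 1)]`; the summand `N` only makes `j` positive.
  set j := ((q : ZMod N)⁻¹ * (2 ^ t - a)).val + N
  have hcast : ((a + j * q : ℕ) : ZMod N) = ((2 ^ t : ℕ) : ZMod N) := by
    simp only [j, Nat.cast_add, Nat.cast_mul, Nat.cast_pow, ZMod.natCast_val, ZMod.cast_id',
      id, ZMod.natCast_self, add_zero]
    linear_combination (2 ^ t - (a : ZMod N)) * hinv
  refine ⟨j, by positivity, ?_⟩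
  rw [padicValNat_two_eq_iff_mod (by positivity [hq.pos]),
    ← Nat.mod_eq_of_lt (Nat.pow_lt_pow_succ one_lt_two : 2 ^ t < N)]
  exact (ZMod.natCast_eq_natCast_iff' _ _ _).mp hcast

theorem exists_padicValNat_two_add_mul_eq {M p w : ℕ} (hp : p ≠ 0)
    (hpM : padicValNat 2 p ≤ padicValNat 2 M) (hw : padicValNat 2 p ≤ w) :
    ∃ j, 0 < j ∧ padicValNat 2 (M + j * p) = w := by
  obtain ⟨s, q, hq, rfl⟩ := Nat.exists_eq_two_pow_mul_odd hp
  have hval : ∀ {m}, m ≠ 0 → padicValNat 2 (2 ^ s * m) = s + padicValNat 2 m := fun hm ↦ by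
    rw [padicValNat.mul (by positivity) hm, padicValNat.prime_pow]
  have hqval : padicValNat 2 q = 0 := padicValNat.eq_zero_of_not_dvd hq.not_two_dvd_nat
  rw [hval hq.pos.ne', hqval, add_zero] at hpM hw
  obtain ⟨M₁, rfl⟩ := (pow_dvd_pow 2 hpM).trans pow_padicValNat_dvd
  obtain ⟨j, hj, hjval⟩ := exists_padicValNat_two_add_mul_odd_eq M₁ hq (w - s)
  refine ⟨j, hj, ?_⟩
  rw [show 2 ^ s * M₁ + j * (2 ^ s * q) = 2 ^ s * (M₁ + j * q) by ring,
    hval (by positivity [hq.pos]), hjval]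
  omega

def letterOfVal (v : ℕ) : A :=
  if v = 0 then A.a else if v % 3 = 0 then A.d else if v % 3 = 1 then A.c else A.b

theorem omegaG_eq_letterOfVal (n : ℕ) : omegaG n = letterOfVal (padicValNat 2 (n + 1)) := rfl

theorem letterOfVal_succ_ne (v : ℕ) : letterOfVal (v + 1) ≠ letterOfVal v := by
  unfold letterOfVal
  split_ifs <;> simp_all <;> omega

theorem exists_lt_letterOfVal_ne (s v : ℕ) : ∃ w, s < w ∧ letterOfVal w ≠ letterOfVal v := by
  by_cases h : letterOfVal (s + 1) = letterOfVal v
  · exact ⟨s + 2, by omega, h ▸ letterOfVal_succ_ne (s + 1)⟩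
  · exact ⟨s + 1, by omega, h⟩

theorem omegaG_add_mul_eq_iff {m p : ℕ} (hp : p ≠ 0) :
    (∀ k, 0 < k → omegaG (m + k * p) = omegaG m) ↔ padicValNat 2 (m + 1) < padicValNat 2 p := by
  have hshift : ∀ k, omegaG (m + k * p) = letterOfVal (padicValNat 2 (m + 1 + k * p)) :=
    fun k ↦ by rw [omegaG_eq_letterOfVal, Nat.add_right_comm]
  constructor
  · intro h
    by_contra! hle
    obtain ⟨w, hw, hne⟩ := exists_lt_letterOfVal_ne (padicValNat 2 p) (padicValNat 2 (m + 1))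
    obtain ⟨j, hj, hjval⟩ := exists_padicValNat_two_add_mul_eq hp hle hw.le
    exact hne (by rw [← hjval, ← hshift]; exact h j hj)
  · intro h k _
    rw [hshift, padicValNat_two_add_mul_of_lt m.succ_ne_zero h, omegaG_eq_letterOfVal]

theorem isToeplitz_omegaG : IsToeplitz omegaG := fun m ↦
  ⟨2 ^ (padicValNat 2 (m + 1) + 1), by positivity,
    (omegaG_add_mul_eq_iff (by positivity)).mpr (by rw [padicValNat.prime_pow]; omega)⟩

theorem mem_EP_omegaG_iff {p : ℕ} :
    p ∈ EP omegaG ↔ 0 < p ∧ ∃ m, padicValNat 2 (m + 1) < padicValNat 2 p ∧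
      ∀ p', 0 < p' → p' < p → padicValNat 2 p' ≤ padicValNat 2 (m + 1) := by
  refine and_congr_right fun hp ↦ exists_congr fun m ↦
    and_congr (omegaG_add_mul_eq_iff hp.ne') (forall₂_congr fun p' hp' ↦ ?_)
  rw [← not_lt, ← omegaG_add_mul_eq_iff hp'.ne']
  simp only [not_forall, ne_eq, exists_prop]

theorem mem_EP_omegaG_iff_eq_two_pow {p : ℕ} : p ∈ EP omegaG ↔ ∃ k, 1 ≤ k ∧ p = 2 ^ k := by
  have two_pow_le (n : ℕ) (hn : 0 < n) : 2 ^ padicValNat 2 n ≤ n :=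
    Nat.le_of_dvd hn pow_padicValNat_dvd
  rw [mem_EP_omegaG_iff]
  constructor
  · rintro ⟨hp, m, hlt, hmin⟩
    set v := padicValNat 2 (m + 1)
    have hle : p ≤ 2 ^ (v + 1) := by
      by_contra! hgt
      have := hmin _ (by positivity) hgt
      rw [padicValNat.prime_pow] at this
      omega
    have hge : 2 ^ (v + 1) ≤ p := (Nat.pow_le_pow_right two_pos hlt).trans (two_pow_le p hp)
    exact ⟨v + 1, by omega, by omega⟩
  · rintro ⟨k, hk, rfl⟩
    refine ⟨by positivity, 2 ^ (k - 1) - 1, ?_, fun p' hp' hlt ↦ ?_⟩ <;>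
      rw [Nat.sub_add_cancel Nat.one_le_two_pow, padicValNat.prime_pow]
    · rw [padicValNat.prime_pow]; omega
    · have := (Nat.pow_lt_pow_iff_right one_lt_two).mp ((two_pow_le p' hp').trans_lt hlt)
      omega

/-- `ω^G` is a Toeplitz sequence whose set of essential partial periods is exactly
`{2^k : k ≥ 1}`. -/
theorem stmt4 :
    IsToeplitz omegaG ∧ EP omegaG = {p : ℕ | ∃ k : ℕ, 1 ≤ k ∧ p = 2 ^ k} :=
  ⟨isToeplitz_omegaG, Set.ext fun _ ↦ mem_EP_omegaG_iff_eq_two_pow⟩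
end

section
/- Let 𝒜 be a nonempty finite alphabet and let ω be a Toeplitz sequence over 𝒜 with EP(ω) = {2^k : k ≥ 1}. Then: (a) the shift σ maps Z(ω,σ) onto Z(ω,σ), i.e. every x ∈ Z(ω,σ) has at least one preimage in Z(ω,σ) under σ; (b) there exists a unique ω* ∈ Z(ω,σ) whose preimage {η ∈ Z(ω,σ) : ση = ω*} contains more than one element; (c) a sequence x ∈ Z(ω,σ) is not a Toeplitz sequence if and only if σ^n x = ω* for some n ≥ 1. -/
open Filter Topology

theorem Filter.Frequently.exists_frequently_eq {ι α : Type*} [Finite α] {l : Filter ι}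
    {f : ι → α} {P : α → Prop} (h : ∃ᶠ i in l, P (f i)) : ∃ a, P a ∧ ∃ᶠ i in l, f i = a := by
  by_contra! H
  refine h ?_
  filter_upwards [eventually_all.2 fun a => eventually_imp_distrib_left.2 (H a)] with i hi
  exact fun hP => hi (f i) hP rfl

theorem Filter.exists_frequently_eq {ι α : Type*} [Finite α] {l : Filter ι} [l.NeBot]
    (f : ι → α) : ∃ a, ∃ᶠ i in l, f i = a :=
  let ⟨a, _, ha⟩ := (Frequently.of_forall (f := l) fun _ => trivial).exists_frequently_eq
    (f := f) (P := fun _ => True)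
  ⟨a, ha⟩

namespace PadicInt

variable {p : ℕ} [Fact p.Prime]

theorem pow_dvd_iff_le_valuation {x : ℤ_[p]} (hx : x ≠ 0) (k : ℕ) :
    (p : ℤ_[p]) ^ k ∣ x ↔ k ≤ x.valuation := by
  rw [← Ideal.mem_span_singleton, mem_span_pow_iff_le_valuation x hx]

theorem add_ne_zero_of_pow_dvd {x y : ℤ_[p]} (hx : x ≠ 0)
    (hy : (p : ℤ_[p]) ^ (x.valuation + 1) ∣ y) : x + y ≠ 0 := by
  intro h
  have hdx := dvd_neg.2 hy
  rw [← eq_neg_of_add_eq_zero_left h] at hdx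
  have := (pow_dvd_iff_le_valuation hx _).1 hdx
  omega

theorem valuation_add_of_pow_dvd {x y : ℤ_[p]} (hx : x ≠ 0)
    (hy : (p : ℤ_[p]) ^ (x.valuation + 1) ∣ y) : (x + y).valuation = x.valuation := by
  have hxy := add_ne_zero_of_pow_dvd hx hy
  have hle : x.valuation ≤ (x + y).valuation := by
    rw [← pow_dvd_iff_le_valuation hxy]
    exact dvd_add ((pow_dvd_iff_le_valuation hx _).2 le_rfl)
      ((pow_dvd_pow _ x.valuation.le_succ).trans hy)
  have hlt : ¬ x.valuation + 1 ≤ (x + y).valuation := by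
    rw [← pow_dvd_iff_le_valuation hxy, dvd_add_left hy, pow_dvd_iff_le_valuation hx]
    omega
  omega

theorem exists_natCast_sub_valuation_eq (c : ℤ_[p]) (t N : ℕ) :
    ∃ n : ℕ, N ≤ n ∧ (n : ℤ_[p]) - c ≠ 0 ∧ ((n : ℤ_[p]) - c).valuation = t := by
  have hpt : (p : ℤ_[p]) ^ t ≠ 0 := pow_ne_zero _ (NeZero.ne _)
  have hval : ((p : ℤ_[p]) ^ t).valuation = t := by simp
  obtain ⟨d, hd⟩ := Ideal.mem_span_singleton.1 (appr_spec (t + 1) (c + (p : ℤ_[p]) ^ t))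
  set n := (c + (p : ℤ_[p]) ^ t).appr (t + 1) + N * p ^ (t + 1)
  have hsplit : (n : ℤ_[p]) - c = p ^ t + p ^ (t + 1) * (N - d) := by
    simp only [n]; push_cast; linear_combination -hd
  have hdvd : (p : ℤ_[p]) ^ (((p : ℤ_[p]) ^ t).valuation + 1) ∣ p ^ (t + 1) * (N - d) := by
    rw [hval]; exact dvd_mul_right _ _
  refine ⟨n, ?_, ?_, ?_⟩
  · exact le_add_left (Nat.le_mul_of_pos_right N (pow_pos (Fact.out : p.Prime).pos _))
  · rw [hsplit]; exact add_ne_zero_of_pow_dvd hpt hdvd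
  · rw [hsplit, valuation_add_of_pow_dvd hpt hdvd, hval]

theorem setOf_pow_dvd_sub_mem_nhds (c : ℤ_[p]) (k : ℕ) :
    {d : ℤ_[p] | (p : ℤ_[p]) ^ k ∣ d - c} ∈ 𝓝 c := by
  have hp : (0 : ℝ) < p := by exact_mod_cast (Fact.out : p.Prime).pos
  filter_upwards [Metric.closedBall_mem_nhds c (zpow_pos hp (-k : ℤ))] with d hd
  rwa [Metric.mem_closedBall, dist_eq_norm, norm_le_pow_iff_mem_span_pow,
    Ideal.mem_span_singleton] at hd

theorem exists_pow_dvd_sub_of_pow_dvd_sub (u : ℕ → ℤ_[p])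
    (hu : ∀ k j, k ≤ j → (p : ℤ_[p]) ^ k ∣ u j - u k) :
    ∃ c, ∀ k, (p : ℤ_[p]) ^ k ∣ c - u k := by
  obtain ⟨c, hc⟩ := exists_clusterPt_of_compactSpace (map u atTop)
  refine ⟨c, fun k => ?_⟩
  obtain ⟨j, hjc, hkj⟩ := ((mapClusterPt_iff_frequently.1 hc _
    (setOf_pow_dvd_sub_mem_nhds c k)).and_eventually (eventually_ge_atTop k)).exists
  simpa using dvd_sub (hu k j hkj) hjc

theorem pow_dvd_natCast_sub_iff {m n k : ℕ} :
    (p : ℤ_[p]) ^ k ∣ (m : ℤ_[p]) - n ↔ m ≡ n [MOD p ^ k] := by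
  rw [Nat.modEq_iff_dvd, dvd_sub_comm, Nat.cast_pow, ← pow_p_dvd_int_iff]
  push_cast; rfl

end PadicInt

theorem iterate_shift_apply {𝒜 : Type*} (x : ℕ → 𝒜) (t n : ℕ) :
    shift^[t] x n = x (n + t) := by
  induction t generalizing n with
  | zero => rfl
  | succ t ih => rw [Function.iterate_succ_apply', shift, ih, add_right_comm]; rfl

theorem mem_orbitClosure_iff {𝒜 : Type*} [TopologicalSpace 𝒜] [DiscreteTopology 𝒜]
    {ω x : ℕ → 𝒜} : x ∈ orbitClosure ω ↔ ∀ L, ∃ t, ∀ i < L, ω (i + t) = x i := by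
  rw [orbitClosure, (PiNat.isTopologicalBasis_cylinders fun _ => 𝒜).mem_closure_iff]
  constructor
  · intro h L
    obtain ⟨_, hy, t, rfl⟩ := h _ ⟨x, L, rfl⟩ (PiNat.self_mem_cylinder x L)
    exact ⟨t, fun i hi => by
      rw [← iterate_shift_apply ω]; exact PiNat.mem_cylinder_iff.1 hy i hi⟩
  · rintro h _ ⟨y, L, rfl⟩ hx
    obtain ⟨t, ht⟩ := h L
    refine ⟨shift^[t] ω, ?_, t, rfl⟩
    rw [← PiNat.mem_cylinder_iff_eq.1 hx]
    exact PiNat.mem_cylinder_iff.2 fun i hi => by rw [iterate_shift_apply, ht i hi]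

section Coding

variable {p : ℕ} [Fact p.Prime] {𝒜 : Type*}

theorem natCast_ne_neg_one (n : ℕ) : (n : ℤ_[p]) ≠ -1 := fun h =>
  Nat.cast_add_one_ne_zero n (by rw [h, neg_add_cancel])

/-- `c` is the image of `x` in the odometer `ℤ_[p]`, the maximal equicontinuous factor; the
position `n = c` is treated apart because `PadicInt.valuation 0 = 0`. -/
structure CodedBy (b : ℕ → 𝒜) (c : ℤ_[p]) (x : ℕ → 𝒜) : Prop where
  apply_of_ne : ∀ n : ℕ, (n : ℤ_[p]) ≠ c → x n = b ((n - c : ℤ_[p]).valuation)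
  frequently_of_eq : ∀ n : ℕ, (n : ℤ_[p]) = c → ∃ᶠ t in atTop, b t = x n

def prepend (a : 𝒜) (x : ℕ → 𝒜) : ℕ → 𝒜
  | 0 => a
  | n + 1 => x n

theorem codedBy_neg_one (b : ℕ → 𝒜) :
    CodedBy b (-1 : ℤ_[p]) fun n => b ((n + 1 : ℤ_[p]).valuation) where
  apply_of_ne n _ := by rw [sub_neg_eq_add]
  frequently_of_eq n h := absurd h (natCast_ne_neg_one n)

namespace CodedBy

variable {b : ℕ → 𝒜} {c c' : ℤ_[p]} {x y : ℕ → 𝒜}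

theorem shift (hx : CodedBy b c x) : CodedBy b (c - 1) (_root_.shift x) where
  apply_of_ne n hn := by
    have hn' : ((n + 1 : ℕ) : ℤ_[p]) ≠ c := by
      push_cast; contrapose! hn; rw [← hn]; ring
    rw [_root_.shift, hx.apply_of_ne _ hn']; congr 2; push_cast; ring
  frequently_of_eq n hn := hx.frequently_of_eq (n + 1) (by push_cast; rw [hn]; ring)

theorem iterate_shift (hx : CodedBy b c x) (k : ℕ) :
    CodedBy b (c - (k : ℤ_[p])) (_root_.shift^[k] x) := by
  induction k with
  | zero => simpa using hx
  | succ k ih => rw [Function.iterate_succ_apply', Nat.cast_succ, ← sub_sub]; exact ih.shift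

theorem prepend (hx : CodedBy b c x) {a : 𝒜}
    (h₀ : c + 1 ≠ 0 → a = b (-(c + 1)).valuation) (h₁ : c + 1 = 0 → ∃ᶠ t in atTop, b t = a) :
    CodedBy b (c + 1) (_root_.prepend a x) where
  apply_of_ne n hn := by
    cases n with
    | zero => exact (h₀ (by simpa [eq_comm] using hn)).trans (by simp)
    | succ n =>
      have hn' : (n : ℤ_[p]) ≠ c := by contrapose! hn; push_cast; rw [hn]
      rw [_root_.prepend, hx.apply_of_ne n hn']; congr 2; push_cast; ring
  frequently_of_eq n hn := by
    cases n with
    | zero => exact h₁ (by simpa [eq_comm] using hn)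
    | succ n => exact hx.frequently_of_eq n (by push_cast at hn; linear_combination hn)

theorem exists_prepend [Finite 𝒜] (hx : CodedBy b c x) :
    ∃ a, CodedBy b (c + 1) (_root_.prepend a x) := by
  by_cases hc : c + 1 = 0
  · obtain ⟨a, ha⟩ := exists_frequently_eq (l := atTop) b
    exact ⟨a, hx.prepend (absurd hc) fun _ => ha⟩
  · exact ⟨_, hx.prepend (fun _ => rfl) (absurd · hc)⟩

theorem eq_of_forall_natCast_ne (hx : CodedBy b c x) (hy : CodedBy b c y)
    (hc : ∀ n : ℕ, (n : ℤ_[p]) ≠ c) : x = y :=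
  funext fun n => (hx.apply_of_ne n (hc n)).trans (hy.apply_of_ne n (hc n)).symm

theorem eq_of_eventuallyEq (hb : ∀ a, ∃ᶠ t in atTop, b t ≠ a) (hx : CodedBy b c x)
    (hy : CodedBy b c' y) (hxy : x =ᶠ[atTop] y) : c = c' := by
  by_contra hne
  have hcc : c - c' ≠ 0 := sub_ne_zero.2 hne
  obtain ⟨N, hN⟩ := eventually_atTop.1 hxy
  have hconst : ∀ t, (c - c').valuation < t → b t = b (c - c').valuation := by
    intro t ht
    obtain ⟨n, hNn, hn0, hnt⟩ := PadicInt.exists_natCast_sub_valuation_eq c t N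
    have hdvd : (p : ℤ_[p]) ^ ((c - c').valuation + 1) ∣ (n : ℤ_[p]) - c :=
      (PadicInt.pow_dvd_iff_le_valuation hn0 _).2 (hnt ▸ ht)
    have hsplit : (n : ℤ_[p]) - c' = (c - c') + ((n : ℤ_[p]) - c) := by ring
    have hn' : (n : ℤ_[p]) ≠ c' :=
      sub_ne_zero.1 (hsplit ▸ PadicInt.add_ne_zero_of_pow_dvd hcc hdvd)
    rw [← hnt, ← hx.apply_of_ne n (sub_ne_zero.1 hn0), hN n hNn, hy.apply_of_ne n hn', hsplit,
      PadicInt.valuation_add_of_pow_dvd hcc hdvd]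
  obtain ⟨t, hne, ht⟩ := ((hb _).and_eventually (eventually_gt_atTop _)).exists
  exact hne (hconst t ht)

theorem eq_zero_of_shift_eq (hb : ∀ a, ∃ᶠ t in atTop, b t ≠ a) (hx : CodedBy b c x)
    (hy : CodedBy b c' y) (hne : x ≠ y) (h : _root_.shift x = _root_.shift y) : c = 0 := by
  have hxy : x =ᶠ[atTop] y := by
    filter_upwards [eventually_ge_atTop 1] with n hn
    obtain ⟨m, rfl⟩ := Nat.exists_eq_add_of_le' hn
    exact congrFun h m
  obtain rfl := hx.eq_of_eventuallyEq hb hy hxy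
  by_contra hc
  have h0 : ((0 : ℕ) : ℤ_[p]) ≠ c := by simpa [eq_comm] using hc
  refine hne (funext fun n => ?_)
  cases n with
  | zero => rw [hx.apply_of_ne 0 h0, hy.apply_of_ne 0 h0]
  | succ n => exact congrFun h n

theorem isToeplitz (hx : CodedBy b c x) (hc : ∀ n : ℕ, (n : ℤ_[p]) ≠ c) : IsToeplitz x := by
  intro n
  have hn0 : (n : ℤ_[p]) - c ≠ 0 := sub_ne_zero.2 (hc n)
  set e := ((n : ℤ_[p]) - c).valuation
  refine ⟨p ^ (e + 1), pow_pos (Fact.out : p.Prime).pos _, fun j _ => ?_⟩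
  have hdvd : (p : ℤ_[p]) ^ (e + 1) ∣ j * (p : ℤ_[p]) ^ (e + 1) := dvd_mul_left _ _
  have hsplit :
      ((n + j * p ^ (e + 1) : ℕ) : ℤ_[p]) - c = ((n : ℤ_[p]) - c) + j * p ^ (e + 1) := by
    push_cast; ring
  rw [hx.apply_of_ne _ (sub_ne_zero.1 (hsplit ▸ PadicInt.add_ne_zero_of_pow_dvd hn0 hdvd)),
    hsplit, PadicInt.valuation_add_of_pow_dvd hn0 hdvd, hx.apply_of_ne n (hc n)]

theorem not_isToeplitz (hb : ∀ a, ∃ᶠ t in atTop, b t ≠ a) (hx : CodedBy b c x) {m : ℕ}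
    (hm : (m : ℤ_[p]) = c) : ¬IsToeplitz x := fun hT => by
  obtain ⟨q, hq, hper⟩ := hT m
  subst hm
  have hq0 : (q : ℤ_[p]) ≠ 0 := Nat.cast_ne_zero.2 hq.ne'
  set v := (q : ℤ_[p]).valuation
  have hconst : ∀ t, v ≤ t → b t = x m := by
    intro t ht
    have hsub : ((m + p ^ (t - v) * q : ℕ) : ℤ_[p]) - m = (p : ℤ_[p]) ^ (t - v) * q := by
      push_cast; ring
    have hne : ((m + p ^ (t - v) * q : ℕ) : ℤ_[p]) ≠ m := by
      rw [← sub_ne_zero, hsub]; exact mul_ne_zero (pow_ne_zero _ (NeZero.ne _)) hq0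
    rw [← hper _ (pow_pos (Fact.out : p.Prime).pos _), hx.apply_of_ne _ hne, hsub,
      PadicInt.valuation_p_pow_mul _ _ hq0, Nat.sub_add_cancel ht]
  obtain ⟨t, hne, ht⟩ := ((hb (x m)).and_eventually (eventually_ge_atTop v)).exists
  exact hne (hconst t ht)

theorem isToeplitz_iff (hb : ∀ a, ∃ᶠ t in atTop, b t ≠ a) (hx : CodedBy b c x) :
    IsToeplitz x ↔ ∀ n : ℕ, (n : ℤ_[p]) ≠ c :=
  ⟨fun hT _ hn => hx.not_isToeplitz hb hn hT, hx.isToeplitz⟩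

theorem not_isToeplitz_iff (hb : ∀ a, ∃ᶠ t in atTop, b t ≠ a) (hx : CodedBy b c x)
    {s : ℕ → 𝒜} (hs : CodedBy b (-1 : ℤ_[p]) s) :
    ¬IsToeplitz x ↔ ∃ n : ℕ, 1 ≤ n ∧ _root_.shift^[n] x = s := by
  rw [hx.isToeplitz_iff hb, not_forall_not]
  constructor
  · rintro ⟨m, rfl⟩
    have hm : (m : ℤ_[p]) - (m + 1 : ℕ) = -1 := by push_cast; ring
    exact ⟨m + 1, by omega, (hm ▸ hx.iterate_shift (m + 1)).eq_of_forall_natCast_ne hs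
      (natCast_ne_neg_one (p := p))⟩
  · rintro ⟨n, hn, hxs⟩
    have := (hx.iterate_shift n).eq_of_eventuallyEq hb hs (EventuallyEq.of_eq hxs)
    exact ⟨n - 1, by push_cast [Nat.cast_sub hn]; linear_combination -this⟩

end CodedBy

end Coding

section OrbitClosure

variable {p : ℕ} [Fact p.Prime] {𝒜 : Type*} [TopologicalSpace 𝒜] [DiscreteTopology 𝒜]
  {b : ℕ → 𝒜} {r c : ℤ_[p]} {ω x : ℕ → 𝒜}

theorem mem_orbitClosure_of_codedBy (hω : ∀ n : ℕ, ω n = b ((n - r : ℤ_[p]).valuation))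
    (hx : CodedBy b c x) : x ∈ orbitClosure ω := by
  refine mem_orbitClosure_iff.2 fun L => ?_
  set M := (Finset.range L).sup (fun i => ((i : ℤ_[p]) - c).valuation) + 1
  obtain ⟨s, hMs, hs⟩ : ∃ s, M ≤ s ∧ ∀ i : ℕ, (i : ℤ_[p]) = c → x i = b s := by
    by_cases h : ∃ i : ℕ, (i : ℤ_[p]) = c
    · obtain ⟨i₀, hi₀⟩ := h
      obtain ⟨s, hs, hMs⟩ :=
        ((hx.frequently_of_eq i₀ hi₀).and_eventually (eventually_ge_atTop M)).exists
      exact ⟨s, hMs, fun i hi => Nat.cast_injective (hi.trans hi₀.symm) ▸ hs.symm⟩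
    · exact ⟨M, le_rfl, fun i hi => absurd ⟨i, hi⟩ h⟩
  -- `shift^[t] ω` is coded by `r - t`, which is `p`-adically closer to `c` than every `i < L`,
  -- at exact distance `p ^ (-s)` so that a free position `i = c` receives `b s`
  obtain ⟨t, -, ht0, hts⟩ := PadicInt.exists_natCast_sub_valuation_eq (r - c) s 0
  refine ⟨t, fun i hi => ?_⟩
  rw [hω]
  by_cases hic : (i : ℤ_[p]) = c
  · rw [hs i hic, ← hts, ← hic]; congr 2; push_cast; ring
  · have hi0 : (i : ℤ_[p]) - c ≠ 0 := sub_ne_zero.2 hic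
    have hdvd : (p : ℤ_[p]) ^ (((i : ℤ_[p]) - c).valuation + 1) ∣ (t : ℤ_[p]) - (r - c) := by
      rw [PadicInt.pow_dvd_iff_le_valuation ht0, hts]
      exact (Nat.add_le_add_right (Finset.le_sup (Finset.mem_range.2 hi)) 1).trans hMs
    rw [hx.apply_of_ne i hic, ← PadicInt.valuation_add_of_pow_dvd hi0 hdvd]
    congr 2; push_cast; ring

theorem exists_codedBy_of_mem_orbitClosure (hr : ∀ n : ℕ, (n : ℤ_[p]) ≠ r)
    (hω : ∀ n : ℕ, ω n = b ((n - r : ℤ_[p]).valuation)) (hx : x ∈ orbitClosure ω) :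
    ∃ c : ℤ_[p], CodedBy b c x := by
  choose t ht using mem_orbitClosure_iff.1 hx
  -- `shift^[t L] ω` is coded by `r - t L`; the code of `x` is a cluster point of these
  obtain ⟨c, hc⟩ := exists_clusterPt_of_compactSpace (map (fun L => r - t L) atTop)
  have hnear : ∀ k n, ∃ L, n < L ∧ (p : ℤ_[p]) ^ k ∣ (r - t L) - c := fun k n =>
    (((mapClusterPt_iff_frequently.1 hc _ (PadicInt.setOf_pow_dvd_sub_mem_nhds c k))
      |>.and_eventually (eventually_gt_atTop n)).exists).imp fun L h => ⟨h.2, h.1⟩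
  have hxn : ∀ n L, n < L → x n = b (((n : ℤ_[p]) - (r - t L)).valuation) := fun n L h => by
    rw [← ht L n h, hω]; congr 2; push_cast; ring
  have hne : ∀ n L : ℕ, (n : ℤ_[p]) - (r - t L) ≠ 0 := fun n L h => hr (n + t L) (by
    push_cast; linear_combination h)
  refine ⟨c, fun n hn => ?_, fun n hn => frequently_atTop.2 fun S => ?_⟩
  · obtain ⟨L, hL, hdvd⟩ := hnear (((n : ℤ_[p]) - c).valuation + 1) n
    rw [hxn n L hL, show (n : ℤ_[p]) - (r - t L) = (n - c) + -((r - t L) - c) by ring,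
      PadicInt.valuation_add_of_pow_dvd (sub_ne_zero.2 hn) hdvd.neg_right]
  · obtain ⟨L, hL, hdvd⟩ := hnear S n
    refine ⟨_, ?_, (hxn n L hL).symm⟩
    rw [← PadicInt.pow_dvd_iff_le_valuation (hne n L), hn, ← dvd_neg, neg_sub]
    exact hdvd

theorem mem_orbitClosure_iff_exists_codedBy (hr : ∀ n : ℕ, (n : ℤ_[p]) ≠ r)
    (hω : ∀ n : ℕ, ω n = b ((n - r : ℤ_[p]).valuation)) :
    x ∈ orbitClosure ω ↔ ∃ c : ℤ_[p], CodedBy b c x :=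
  ⟨exists_codedBy_of_mem_orbitClosure hr hω, fun ⟨_, hc⟩ => mem_orbitClosure_of_codedBy hω hc⟩

end OrbitClosure

section Periods

variable {𝒜 : Type*} {x : ℕ → 𝒜} {q q' m n : ℕ}

def IsPeriodicAt (x : ℕ → 𝒜) (q n : ℕ) : Prop :=
  ∀ k, 0 < k → x (n + k * q) = x n

theorem IsPeriodicAt.of_dvd (h : IsPeriodicAt x q n) (hq : q ∣ q') : IsPeriodicAt x q' n := by
  obtain ⟨d, rfl⟩ := hq
  intro k hk
  rcases Nat.eq_zero_or_pos d with rfl | hd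
  · simp
  · rw [← h (k * d) (Nat.mul_pos hk hd), mul_comm q, mul_assoc]

theorem IsPeriodicAt.apply_eq_of_modEq_of_le (h : IsPeriodicAt x q n) (hm : m ≡ n [MOD q])
    (hnm : n ≤ m) : x m = x n := by
  obtain ⟨k, hk⟩ := (Nat.modEq_iff_dvd' hnm).1 hm.symm
  rcases Nat.eq_zero_or_pos k with rfl | hk0
  · rw [show m = n by omega]
  · rw [show m = n + k * q by rw [mul_comm, ← hk]; omega, h k hk0]

theorem IsToeplitz.apply_eq_of_modEq (hx : IsToeplitz x) (h : IsPeriodicAt x q n)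
    (hm : m ≡ n [MOD q]) : x m = x n := by
  obtain ⟨q', hq', hm'⟩ := hx m
  rcases Nat.eq_zero_or_pos q with rfl | hq
  · rw [Nat.modEq_zero_iff.1 hm]
  -- a far translate of `m` by a common period lands above `n`, in the class of `n`
  have hfar : m + (n + 1) * q * q' ≡ n [MOD q] := by
    rw [mul_right_comm]; exact (Nat.add_mul_mod_self_right _ _ _).trans hm
  have hle : n + 1 ≤ (n + 1) * q * q' := by
    rw [mul_assoc]; exact Nat.le_mul_of_pos_right _ (Nat.mul_pos hq hq')
  rw [← hm' ((n + 1) * q) (by positivity), h.apply_eq_of_modEq_of_le hfar (by omega)]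

theorem IsToeplitz.isPeriodicAt_of_modEq (hx : IsToeplitz x) (h : IsPeriodicAt x q n)
    (hm : m ≡ n [MOD q]) : IsPeriodicAt x q m := fun _ _ =>
  (hx.apply_eq_of_modEq h ((Nat.add_mul_mod_self_right _ _ _).trans hm)).trans
    (hx.apply_eq_of_modEq h hm).symm

theorem IsToeplitz.exists_mem_EP (hx : IsToeplitz x) (n : ℕ) :
    ∃ q ∈ EP x, IsPeriodicAt x q n := by
  classical
  have hex : ∃ q, 0 < q ∧ IsPeriodicAt x q n := hx n
  obtain ⟨hpos, hper⟩ := Nat.find_spec hex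
  refine ⟨Nat.find hex, ⟨hpos, n, hper, fun q' hq' hlt => ?_⟩, hper⟩
  by_contra! h
  exact Nat.find_min hex hlt ⟨hq', h⟩

theorem exists_isPeriodicAt_not_of_mem_EP (hq : q ∈ EP x) (hq' : 0 < q') (hlt : q' < q) :
    ∃ m, IsPeriodicAt x q m ∧ ¬IsPeriodicAt x q' m := by
  obtain ⟨-, m, hper, hfail⟩ := hq
  obtain ⟨k, hk, hne⟩ := hfail q' hq' hlt
  exact ⟨m, hper, fun h => hne (h k hk)⟩

end Periods

-- A residue class mod `2 ^ k` is the union of exactly two classes mod `2 ^ (k + 1)`.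
theorem Nat.modEq_or_modEq_of_modEq_two_pow {a b c n k : ℕ} (ha : a ≡ c [MOD 2 ^ k])
    (hb : b ≡ c [MOD 2 ^ k]) (hn : n ≡ c [MOD 2 ^ k]) (hab : ¬a ≡ b [MOD 2 ^ (k + 1)]) :
    n ≡ a [MOD 2 ^ (k + 1)] ∨ n ≡ b [MOD 2 ^ (k + 1)] := by
  unfold Nat.ModEq at *
  rw [Nat.mod_pow_succ, Nat.mod_pow_succ] at hab ⊢
  rw [Nat.mod_pow_succ]
  rcases Nat.mod_two_eq_zero_or_one (a / 2 ^ k) with h₁ | h₁ <;>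
  rcases Nat.mod_two_eq_zero_or_one (b / 2 ^ k) with h₂ | h₂ <;>
  rcases Nat.mod_two_eq_zero_or_one (n / 2 ^ k) with h₃ | h₃ <;>
  simp only [h₁, h₂, h₃, mul_zero, mul_one] at hab ⊢ <;> omega

section Dyadic

variable {𝒜 : Type*} {x : ℕ → 𝒜}

theorem not_isPeriodicAt_one_of_EP_eq (hEP : EP x = {p : ℕ | ∃ k : ℕ, 1 ≤ k ∧ p = 2 ^ k})
    (n : ℕ) : ¬IsPeriodicAt x 1 n := fun h => by
  have h1 : 1 ∈ EP x := ⟨one_pos, n, h, fun _ h0 h1 => by omega⟩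
  obtain ⟨k, hk, hk1⟩ := hEP ▸ h1
  exact (Nat.one_lt_two_pow (by omega)).ne hk1

theorem exists_isPeriodicAt_two_pow_succ_of_EP_eq
    (hEP : EP x = {p : ℕ | ∃ k : ℕ, 1 ≤ k ∧ p = 2 ^ k}) (k : ℕ) :
    ∃ m, IsPeriodicAt x (2 ^ (k + 1)) m ∧ ¬IsPeriodicAt x (2 ^ k) m :=
  exists_isPeriodicAt_not_of_mem_EP (hEP ▸ ⟨k + 1, by omega, rfl⟩) (by positivity)
    (Nat.pow_lt_pow_succ one_lt_two)

theorem not_isPeriodicAt_two_pow_of_succ {k n : ℕ} (h : ¬IsPeriodicAt x (2 ^ (k + 1)) n) :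
    ¬IsPeriodicAt x (2 ^ k) n :=
  fun hk => h (hk.of_dvd (pow_dvd_pow 2 k.le_succ))

namespace IsToeplitz

theorem exists_not_isPeriodicAt_two_pow_iff_modEq (hx : IsToeplitz x)
    (hEP : EP x = {p : ℕ | ∃ k : ℕ, 1 ≤ k ∧ p = 2 ^ k}) :
    ∀ k, ∃ ρ, ∀ n, ¬IsPeriodicAt x (2 ^ k) n ↔ n ≡ ρ [MOD 2 ^ k]
  | 0 => ⟨0, fun n => iff_of_true (not_isPeriodicAt_one_of_EP_eq hEP n) (by simp [Nat.modEq_one])⟩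
  | k + 1 => by
    obtain ⟨ρ, hρ⟩ := exists_not_isPeriodicAt_two_pow_iff_modEq hx hEP k
    obtain ⟨m, hm, hm'⟩ := exists_isPeriodicAt_two_pow_succ_of_EP_eq hEP k
    obtain ⟨n₀, -, hn₀⟩ := exists_isPeriodicAt_two_pow_succ_of_EP_eq hEP (k + 1)
    refine ⟨n₀, fun n => ⟨fun hn => ?_, fun hn hper =>
      hn₀ (hx.isPeriodicAt_of_modEq hper hn.symm)⟩⟩
    -- the class of `ρ` mod `2 ^ k` splits into that of the periodic `m` and that of `n₀`
    have hmn₀ : ¬n₀ ≡ m [MOD 2 ^ (k + 1)] := fun h => hn₀ (hx.isPeriodicAt_of_modEq hm h)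
    refine (Nat.modEq_or_modEq_of_modEq_two_pow
      ((hρ n₀).1 (not_isPeriodicAt_two_pow_of_succ hn₀)) ((hρ m).1 hm')
      ((hρ n).1 (not_isPeriodicAt_two_pow_of_succ hn)) hmn₀).resolve_right
      fun h => hn (hx.isPeriodicAt_of_modEq hm h)

theorem apply_eq_of_isPeriodicAt_two_pow_succ (hx : IsToeplitz x)
    (hEP : EP x = {p : ℕ | ∃ k : ℕ, 1 ≤ k ∧ p = 2 ^ k}) {e m n : ℕ}
    (hn : IsPeriodicAt x (2 ^ (e + 1)) n) (hn' : ¬IsPeriodicAt x (2 ^ e) n)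
    (hm : IsPeriodicAt x (2 ^ (e + 1)) m) (hm' : ¬IsPeriodicAt x (2 ^ e) m) : x m = x n := by
  obtain ⟨ρ, hρ⟩ := hx.exists_not_isPeriodicAt_two_pow_iff_modEq hEP e
  obtain ⟨ρ', hρ'⟩ := hx.exists_not_isPeriodicAt_two_pow_iff_modEq hEP (e + 1)
  have hρ'ρ : ρ' ≡ ρ [MOD 2 ^ e] :=
    (hρ ρ').1 (not_isPeriodicAt_two_pow_of_succ ((hρ' ρ').2 rfl))
  rcases Nat.modEq_or_modEq_of_modEq_two_pow ((hρ n).1 hn') hρ'ρ ((hρ m).1 hm')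
    (fun h => (hρ' n).2 h hn) with h | h
  · exact hx.apply_eq_of_modEq hn h
  · exact absurd hm ((hρ' m).2 h)

theorem exists_twoAdic_not_isPeriodicAt_iff (hx : IsToeplitz x)
    (hEP : EP x = {p : ℕ | ∃ k : ℕ, 1 ≤ k ∧ p = 2 ^ k}) :
    ∃ r : ℤ_[2], ∀ (k n : ℕ), ¬IsPeriodicAt x (2 ^ k) n ↔ (2 : ℤ_[2]) ^ k ∣ n - r := by
  choose ρ hρ using hx.exists_not_isPeriodicAt_two_pow_iff_modEq hEP
  have hcoh (k j : ℕ) (hkj : k ≤ j) : ((2 : ℕ) : ℤ_[2]) ^ k ∣ (ρ j : ℤ_[2]) - ρ k := by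
    rw [PadicInt.pow_dvd_natCast_sub_iff, ← hρ]
    exact fun h => (hρ j _).2 rfl (h.of_dvd (pow_dvd_pow 2 hkj))
  obtain ⟨r, hr⟩ := PadicInt.exists_pow_dvd_sub_of_pow_dvd_sub (fun k => (ρ k : ℤ_[2])) hcoh
  refine ⟨r, fun k n => ?_⟩
  rw [hρ, ← PadicInt.pow_dvd_natCast_sub_iff, ← dvd_sub_left (hr k), sub_sub_sub_cancel_right,
    Nat.cast_ofNat]

theorem exists_codedBy_twoAdic (hx : IsToeplitz x)
    (hEP : EP x = {p : ℕ | ∃ k : ℕ, 1 ≤ k ∧ p = 2 ^ k}) :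
    ∃ (r : ℤ_[2]) (b : ℕ → 𝒜), (∀ n : ℕ, (n : ℤ_[2]) ≠ r) ∧
      (∀ n : ℕ, x n = b ((n - r : ℤ_[2]).valuation)) ∧ ∀ a, ∃ᶠ t in atTop, b t ≠ a := by
  obtain ⟨r, hr⟩ := hx.exists_twoAdic_not_isPeriodicAt_iff hEP
  have hne : ∀ n : ℕ, (n : ℤ_[2]) ≠ r := fun n h => by
    obtain ⟨q, hq, hper⟩ := hx.exists_mem_EP n
    obtain ⟨k, -, rfl⟩ := hEP ▸ hq
    exact (hr k n).2 (by rw [h, sub_self]; exact dvd_zero _) hper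
  have hdepth : ∀ n : ℕ, IsPeriodicAt x (2 ^ ((n - r : ℤ_[2]).valuation + 1)) n ∧
      ¬IsPeriodicAt x (2 ^ (n - r : ℤ_[2]).valuation) n := fun n => by
    have h : ∀ k, (2 : ℤ_[2]) ^ k ∣ n - r ↔ k ≤ ((n : ℤ_[2]) - r).valuation :=
      PadicInt.pow_dvd_iff_le_valuation (sub_ne_zero.2 (hne n))
    rw [← not_not (a := IsPeriodicAt x _ n), hr, hr, h, h]
    omega
  choose m _ _ hm using fun e => PadicInt.exists_natCast_sub_valuation_eq r e 0
  have hx' : ∀ n : ℕ, x n = x (m ((n - r : ℤ_[2]).valuation)) := fun n => by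
    have hmn := hdepth (m ((n - r : ℤ_[2]).valuation))
    rw [hm] at hmn
    exact (hx.apply_eq_of_isPeriodicAt_two_pow_succ hEP (hdepth n).1 (hdepth n).2 hmn.1 hmn.2).symm
  refine ⟨r, x ∘ m, hne, hx', fun a => ?_⟩
  by_contra h
  obtain ⟨d, hd⟩ := eventually_atTop.1 (not_frequently.1 h)
  have hval : ∀ n : ℕ, (2 : ℤ_[2]) ^ d ∣ n - r → x n = a := fun n hn => by
    rw [hx' n]
    exact not_not.1 (hd _ ((PadicInt.pow_dvd_iff_le_valuation (sub_ne_zero.2 (hne n)) d).1 hn))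
  obtain ⟨n₀, -, hn₀⟩ := exists_isPeriodicAt_two_pow_succ_of_EP_eq hEP d
  have h₀ := (hr d n₀).1 hn₀
  refine hn₀ fun j _ => ?_
  have hj : (2 : ℤ_[2]) ^ d ∣ ((n₀ + j * 2 ^ d : ℕ) : ℤ_[2]) - r := by
    push_cast; rw [add_sub_right_comm]; exact dvd_add h₀ (dvd_mul_left _ _)
  rw [hval n₀ h₀, hval _ hj]

end IsToeplitz

end Dyadic

theorem stmt6_general {𝒜 : Type*} [Fintype 𝒜] [TopologicalSpace 𝒜] [DiscreteTopology 𝒜]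
    (ω : ℕ → 𝒜) (hT : IsToeplitz ω)
    (hEP : EP ω = {p : ℕ | ∃ k : ℕ, 1 ≤ k ∧ p = 2 ^ k}) :
    (∀ x ∈ orbitClosure ω, ∃ y ∈ orbitClosure ω, shift y = x) ∧
    ∃ ωs ∈ orbitClosure ω,
      (∃ η₁ ∈ orbitClosure ω, ∃ η₂ ∈ orbitClosure ω,
        η₁ ≠ η₂ ∧ shift η₁ = ωs ∧ shift η₂ = ωs) ∧
      (∀ w ∈ orbitClosure ω,
        (∃ η₁ ∈ orbitClosure ω, ∃ η₂ ∈ orbitClosure ω,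
          η₁ ≠ η₂ ∧ shift η₁ = w ∧ shift η₂ = w) → w = ωs) ∧
      (∀ x ∈ orbitClosure ω, (¬ IsToeplitz x ↔ ∃ n : ℕ, 1 ≤ n ∧ shift^[n] x = ωs)) := by
  obtain ⟨r, b, hr, hω, hb⟩ := hT.exists_codedBy_twoAdic hEP
  have hZ (x : ℕ → 𝒜) : x ∈ orbitClosure ω ↔ ∃ c : ℤ_[2], CodedBy b c x :=
    mem_orbitClosure_iff_exists_codedBy hr hω
  have hωs := codedBy_neg_one (p := 2) b
  obtain ⟨a₁, ha₁⟩ := exists_frequently_eq (l := atTop) b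
  obtain ⟨a₂, ha₁₂, ha₂⟩ := (hb a₁).exists_frequently_eq (f := b) (P := (· ≠ a₁))
  -- the two preimages of `ωs`, coded by `0`, differ only in the free value at position `0`
  have hη (a : 𝒜) (ha : ∃ᶠ t in atTop, b t = a) : prepend a _ ∈ orbitClosure ω :=
    (hZ _).2 ⟨_, hωs.prepend (absurd (neg_add_cancel 1)) fun _ => ha⟩
  refine ⟨fun x hx => ?_, _, (hZ _).2 ⟨_, hωs⟩, ⟨_, hη a₁ ha₁, _, hη a₂ ha₂,
    fun h => ha₁₂ (congrFun h 0).symm, rfl, rfl⟩, ?_, fun x hx => ?_⟩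
  · obtain ⟨c, hc⟩ := (hZ x).1 hx
    obtain ⟨a, ha⟩ := hc.exists_prepend
    exact ⟨_, (hZ _).2 ⟨_, ha⟩, rfl⟩
  · rintro w - ⟨η₁, hη₁, η₂, hη₂, hne, rfl, h⟩
    obtain ⟨c₁, hc₁⟩ := (hZ _).1 hη₁
    obtain ⟨c₂, hc₂⟩ := (hZ _).1 hη₂
    obtain rfl := hc₁.eq_zero_of_shift_eq hb hc₂ hne h.symm
    exact (zero_sub (1 : ℤ_[2]) ▸ hc₁.shift).eq_of_forall_natCast_ne hωs natCast_ne_neg_one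
  · obtain ⟨c, hc⟩ := (hZ x).1 hx
    exact hc.not_isToeplitz_iff hb hωs

/-- For a Toeplitz sequence `ω` with `EP(ω) = {2^k : k ≥ 1}`:
(a) the shift maps `Z(ω,σ)` onto itself;
(b) there is a unique `ω* ∈ Z(ω,σ)` with more than one shift-preimage in `Z(ω,σ)`;
(c) `x ∈ Z(ω,σ)` is not Toeplitz iff `σ^n x = ω*` for some `n ≥ 1`. -/
theorem stmt6 {𝒜 : Type*} [Fintype 𝒜] [Nonempty 𝒜] [TopologicalSpace 𝒜] [DiscreteTopology 𝒜]
    (ω : ℕ → 𝒜) (hT : IsToeplitz ω)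
    (hEP : EP ω = {p : ℕ | ∃ k : ℕ, 1 ≤ k ∧ p = 2 ^ k}) :
    (∀ x ∈ orbitClosure ω, ∃ y ∈ orbitClosure ω, shift y = x) ∧
    ∃ ωs ∈ orbitClosure ω,
      (∃ η₁ ∈ orbitClosure ω, ∃ η₂ ∈ orbitClosure ω,
        η₁ ≠ η₂ ∧ shift η₁ = ωs ∧ shift η₂ = ωs) ∧
      (∀ w ∈ orbitClosure ω,
        (∃ η₁ ∈ orbitClosure ω, ∃ η₂ ∈ orbitClosure ω,
          η₁ ≠ η₂ ∧ shift η₁ = w ∧ shift η₂ = w) → w = ωs) ∧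
      (∀ x ∈ orbitClosure ω, (¬ IsToeplitz x ↔ ∃ n : ℕ, 1 ≤ n ∧ shift^[n] x = ωs)) :=
  stmt6_general ω hT hEP
end

section
/- Let X be a compact topological space, T : X → X a continuous map, and (n_i)_{i≥1} a sequence of positive integers. Suppose that for every k ≥ 1 there exists a continuous surjection f_k : X → ℤ/(n₁n₂⋯n_k)ℤ with f_k(Tx) = f_k(x) + 1 for all x ∈ X (i.e. T is a continuous extension of cyclic permutations of orders n₁, n₁n₂, n₁n₂n₃, …). Then T is a continuous extension of the odometer on ∏_{i≥1} ℤ/n_iℤ: there exists a continuous surjection F : X → ∏_{i≥1} ℤ/n_iℤ with F(Tx) = T₀(F(x)) for all x ∈ X, where T₀ is the odometer. -/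
/-!
Correct the given maps `f k : X → ℤ/(n₀⋯n_k)` one at a time so that each reduces to the
previous one: the difference of `f (k+1)` (reduced) and the corrected `f k` is `T`-invariant,
so adding a lift of it preserves `f (T x) = f x + 1`. The `i`-th coordinate of `F x` is the
`i`-th mixed-radix digit of the `i`-th corrected map, and adding one to a number acts on its
mixed-radix digits as the odometer. Each corrected map is onto, so `F` has dense range, which is
closed by compactness.
-/

def odometer (n : ℕ → ℕ) : ((i : ℕ) → ZMod (n i)) → ((i : ℕ) → ZMod (n i)) :=
  fun x i => if ∀ j, j < i → x j = -1 then x i + 1 else x i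

open Finset Function

theorem odometer_apply_congr {n : ℕ → ℕ} {u v : (i : ℕ) → ZMod (n i)} {i : ℕ}
    (h : ∀ j ≤ i, u j = v j) : odometer n u i = odometer n v i := by
  have hcarry : (∀ j < i, u j = -1) ↔ ∀ j < i, v j = -1 :=
    forall₂_congr fun j hj => by rw [h j hj.le]
  simp only [odometer, hcarry, h i le_rfl]

namespace MixedRadix

variable (n : ℕ → ℕ)

def placeValue (i : ℕ) : ℕ := ∏ j ∈ range i, n j

def digit (w i : ℕ) : ZMod (n i) := (w / placeValue n i : ℕ)

variable {n}

theorem placeValue_succ (i : ℕ) : placeValue n (i + 1) = placeValue n i * n i :=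
  prod_range_succ n i

theorem placeValue_dvd_placeValue {i k : ℕ} (h : i ≤ k) : placeValue n i ∣ placeValue n k :=
  prod_dvd_prod_of_subset _ _ _ (range_subset_range.2 h)

theorem placeValue_pos (hn : ∀ i, 0 < n i) (i : ℕ) : 0 < placeValue n i :=
  prod_pos fun j _ => hn j

theorem digit_mod_placeValue_succ (w i : ℕ) :
    digit n (w % placeValue n (i + 1)) i = digit n w i := by
  rw [digit, placeValue_succ, Nat.mod_mul_right_div_self, ZMod.natCast_mod, digit]

theorem digit_mod_placeValue {w i k : ℕ} (h : i < k) :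
    digit n (w % placeValue n k) i = digit n w i := by
  rw [← digit_mod_placeValue_succ, Nat.mod_mod_of_dvd _ (placeValue_dvd_placeValue h),
    digit_mod_placeValue_succ]

theorem digit_eq_neg_one_iff {w i : ℕ} : digit n w i = -1 ↔ n i ∣ w / placeValue n i + 1 := by
  rw [digit, ← ZMod.natCast_eq_zero_iff, Nat.cast_add, Nat.cast_one, eq_neg_iff_add_eq_zero]

theorem forall_digit_eq_neg_one_iff {w i : ℕ} :
    (∀ j < i, digit n w j = -1) ↔ placeValue n i ∣ w + 1 := by
  induction i with
  | zero => simp [placeValue]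
  | succ i ih =>
    rw [Nat.forall_lt_succ_right, ih, digit_eq_neg_one_iff, placeValue_succ]
    constructor
    · rintro ⟨hP, hn⟩
      exact Nat.mul_dvd_of_dvd_div hP (Nat.succ_div_of_dvd hP ▸ hn)
    · intro h
      have hP := dvd_of_mul_right_dvd h
      exact ⟨hP, Nat.succ_div_of_dvd hP ▸ Nat.dvd_div_of_mul_dvd h⟩

theorem digit_succ (w : ℕ) : digit n (w + 1) = odometer n (digit n w) := by
  funext i
  unfold odometer
  split_ifs with h
  · rw [forall_digit_eq_neg_one_iff] at h
    simp only [digit, Nat.succ_div_of_dvd h, Nat.cast_succ]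
  · rw [forall_digit_eq_neg_one_iff] at h
    simp only [digit, Nat.succ_div_of_not_dvd h]

theorem exists_digit_eq (hn : ∀ i, 0 < n i) (y : (i : ℕ) → ZMod (n i)) (k : ℕ) :
    ∃ w, ∀ i < k, digit n w i = y i := by
  induction k with
  | zero => exact ⟨0, by simp⟩
  | succ k ih =>
    obtain ⟨w, hw⟩ := ih
    have : NeZero (n k) := ⟨(hn k).ne'⟩
    have hP := placeValue_pos hn k
    refine ⟨w + placeValue n k * (y k - digit n w k).val, fun i hi => ?_⟩
    rcases Nat.lt_succ_iff_lt_or_eq.1 hi with hi | rfl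
    · rw [← digit_mod_placeValue hi, Nat.add_mul_mod_self_left, digit_mod_placeValue hi, hw i hi]
    · rw [digit, Nat.add_mul_div_left _ _ hP, Nat.cast_add, ZMod.natCast_zmod_val, ← digit]
      ring

end MixedRadix

section AlignMod

variable {X : Type*} {m m' : ℕ}

theorem ZMod.val_castHom [NeZero m'] (h : m ∣ m') (a : ZMod m') :
    (ZMod.castHom h (ZMod m) a).val = a.val % m := by
  rw [ZMod.castHom_apply, ZMod.cast_eq_val, ZMod.val_natCast]

/-- `f` shifted by a lift of `g - f` so that it reduces to `g` modulo `m`. -/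
def alignMod (hm : m ∣ m') (f : X → ZMod m') (g : X → ZMod m) : X → ZMod m' :=
  fun x => f x + ((g x - ZMod.castHom hm (ZMod m) (f x)).val : ZMod m')

theorem castHom_alignMod [NeZero m] (hm : m ∣ m') (f : X → ZMod m') (g : X → ZMod m) (x : X) :
    ZMod.castHom hm (ZMod m) (alignMod hm f g x) = g x := by
  rw [alignMod, map_add, map_natCast, ZMod.natCast_zmod_val, add_sub_cancel]

theorem Function.Semiconj.alignMod {T : X → X} (hm : m ∣ m') {f : X → ZMod m'}
    {g : X → ZMod m} (hf : Semiconj f T (· + 1)) (hg : Semiconj g T (· + 1)) :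
    Semiconj (alignMod hm f g) T (· + 1) := by
  intro x
  simp only [_root_.alignMod, hf x, hg x, map_add, map_one, add_sub_add_right_eq_sub]
  ring

theorem Continuous.alignMod [TopologicalSpace X] (hm : m ∣ m') {f : X → ZMod m'}
    {g : X → ZMod m} (hf : Continuous f) (hg : Continuous g) :
    Continuous (alignMod hm f g) :=
  (continuous_of_discreteTopology (f := fun p : ZMod m' × ZMod m =>
    p.1 + ((p.2 - ZMod.castHom hm (ZMod m) p.1).val : ZMod m'))).comp (hf.prodMk hg)

theorem surjective_of_semiconj_add_one [Nonempty X] [NeZero m] {T : X → X} {g : X → ZMod m}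
    (hg : Semiconj g T (· + 1)) : Surjective g := by
  obtain ⟨x⟩ := ‹Nonempty X›
  intro a
  refine ⟨T^[(a - g x).val] x, ?_⟩
  rw [hg.iterate_right _ x, add_right_iterate, nsmul_one, ZMod.natCast_zmod_val]
  exact add_sub_cancel _ _

end AlignMod

section OdometerFactor

open MixedRadix

variable {X : Type*} {n : ℕ → ℕ}

def compatibleFamily (f : ∀ k, X → ZMod (placeValue n (k + 1))) :
    ∀ k, X → ZMod (placeValue n (k + 1))
  | 0 => f 0
  | k + 1 => alignMod (placeValue_dvd_placeValue (Nat.le_succ _)) (f (k + 1)) (compatibleFamily f k)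

theorem val_compatibleFamily_of_le (hn : ∀ i, 0 < n i) (f : ∀ k, X → ZMod (placeValue n (k + 1)))
    {j k : ℕ} (hjk : j ≤ k) (x : X) :
    (compatibleFamily f j x).val = (compatibleFamily f k x).val % placeValue n (j + 1) := by
  have (i : ℕ) : NeZero (placeValue n i) := ⟨(placeValue_pos hn i).ne'⟩
  induction k, hjk using Nat.le_induction with
  | base => exact (Nat.mod_eq_of_lt (ZMod.val_lt _)).symm
  | succ k hjk ih =>
    rw [ih, ← castHom_alignMod (placeValue_dvd_placeValue (Nat.le_succ _)) (f (k + 1))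
      (compatibleFamily f k) x, ZMod.val_castHom, Nat.mod_mod_of_dvd _
      (placeValue_dvd_placeValue (by omega))]
    rfl

theorem semiconj_compatibleFamily {T : X → X} {f : ∀ k, X → ZMod (placeValue n (k + 1))}
    (hf : ∀ k, Semiconj (f k) T (· + 1)) (k : ℕ) : Semiconj (compatibleFamily f k) T (· + 1) := by
  induction k with
  | zero => exact hf 0
  | succ k ih => exact (hf (k + 1)).alignMod _ ih

theorem continuous_compatibleFamily [TopologicalSpace X]
    {f : ∀ k, X → ZMod (placeValue n (k + 1))} (hf : ∀ k, Continuous (f k)) (k : ℕ) :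
    Continuous (compatibleFamily f k) := by
  induction k with
  | zero => exact hf 0
  | succ k ih => exact (hf (k + 1)).alignMod _ ih

def odometerFactor (f : ∀ k, X → ZMod (placeValue n (k + 1))) (x : X) (i : ℕ) : ZMod (n i) :=
  digit n (compatibleFamily f i x).val i

theorem odometerFactor_eq_digit (hn : ∀ i, 0 < n i) (f : ∀ k, X → ZMod (placeValue n (k + 1)))
    {i k : ℕ} (hik : i ≤ k) (x : X) :
    odometerFactor f x i = digit n (compatibleFamily f k x).val i := by
  rw [odometerFactor, val_compatibleFamily_of_le hn f hik, digit_mod_placeValue (Nat.lt_succ_self i)]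

theorem continuous_odometerFactor [TopologicalSpace X] {f : ∀ k, X → ZMod (placeValue n (k + 1))}
    (hf : ∀ k, Continuous (f k)) : Continuous (odometerFactor f) :=
  continuous_pi fun i => (continuous_of_discreteTopology
    (f := fun a : ZMod (placeValue n (i + 1)) => digit n a.val i)).comp
      (continuous_compatibleFamily hf i)

theorem semiconj_odometerFactor (hn : ∀ i, 0 < n i) {T : X → X}
    {f : ∀ k, X → ZMod (placeValue n (k + 1))} (hf : ∀ k, Semiconj (f k) T (· + 1)) :
    Semiconj (odometerFactor f) T (odometer n) := by
  intro x
  funext i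
  have : NeZero (placeValue n (i + 1)) := ⟨(placeValue_pos hn _).ne'⟩
  set a := compatibleFamily f i x
  have hsucc : (compatibleFamily f i (T x)).val = (a.val + 1) % placeValue n (i + 1) := by
    rw [semiconj_compatibleFamily hf i x, ← ZMod.val_natCast, Nat.cast_succ, ZMod.natCast_zmod_val]
  rw [odometerFactor, hsucc, digit_mod_placeValue (Nat.lt_succ_self i), digit_succ]
  exact odometer_apply_congr fun j hj => (odometerFactor_eq_digit hn f hj x).symm

theorem denseRange_odometerFactor [Nonempty X] (hn : ∀ i, 0 < n i) {T : X → X}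
    {f : ∀ k, X → ZMod (placeValue n (k + 1))} (hf : ∀ k, Semiconj (f k) T (· + 1)) :
    DenseRange (odometerFactor f) := by
  intro y
  have hx (k : ℕ) : ∃ x, ∀ i < k + 1, odometerFactor f x i = y i := by
    have : NeZero (placeValue n (k + 1)) := ⟨(placeValue_pos hn _).ne'⟩
    obtain ⟨w, hw⟩ := exists_digit_eq hn y (k + 1)
    obtain ⟨x, hx⟩ := surjective_of_semiconj_add_one (semiconj_compatibleFamily hf k) (w : ZMod _)
    refine ⟨x, fun i hi => ?_⟩
    rw [odometerFactor_eq_digit hn f (Nat.lt_succ_iff.1 hi), hx, ZMod.val_natCast,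
      digit_mod_placeValue hi, hw i hi]
  choose x hx using hx
  refine mem_closure_of_tendsto (b := Filter.atTop) (tendsto_pi_nhds.2 fun i => ?_)
    (Filter.Eventually.of_forall fun k => Set.mem_range_self (x k))
  exact tendsto_atTop_of_eventually_const fun k (hk : i ≤ k) => hx k i (Nat.lt_succ_of_le hk)

end OdometerFactor

theorem stmt15_general {X : Type*} [TopologicalSpace X] [CompactSpace X]
    (T : X → X) (n : ℕ → ℕ) (hn : ∀ i, 0 < n i)
    (h : ∀ k : ℕ, ∃ f : X → ZMod (∏ i ∈ Finset.range (k + 1), n i),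
      Continuous f ∧ Function.Surjective f ∧ ∀ x, f (T x) = f x + 1) :
    ∃ F : X → ((i : ℕ) → ZMod (n i)),
      Continuous F ∧ Function.Surjective F ∧ ∀ x, F (T x) = odometer n (F x) := by
  choose f hf_cont hf_surj hf_semiconj using h
  have : Nonempty X := ⟨(hf_surj 0 0).choose⟩
  have hF_cont := continuous_odometerFactor (n := n) hf_cont
  refine ⟨odometerFactor f, hF_cont, ?_, semiconj_odometerFactor hn hf_semiconj⟩
  have hclosure := (denseRange_odometerFactor hn hf_semiconj).closure_range
  rwa [(isCompact_range hF_cont).isClosed.closure_eq, Set.range_eq_univ] at hclosure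

/-- If a continuous map `T` of a compact space is a continuous extension of cyclic
permutations of orders `n₁, n₁n₂, n₁n₂n₃, …`, then it is a continuous extension of
the odometer on `∏ ℤ/n_iℤ`. -/
theorem stmt15 {X : Type*} [TopologicalSpace X] [CompactSpace X]
    (T : X → X) (hT : Continuous T) (n : ℕ → ℕ) (hn : ∀ i, 0 < n i)
    (h : ∀ k : ℕ, ∃ f : X → ZMod (∏ i ∈ Finset.range (k + 1), n i),
      Continuous f ∧ Function.Surjective f ∧ ∀ x, f (T x) = f x + 1) :
    ∃ F : X → ((i : ℕ) → ZMod (n i)),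
      Continuous F ∧ Function.Surjective F ∧ ∀ x, F (T x) = odometer n (F x) :=
  stmt15_general T n hn h
end
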